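/- If H is a finite 2-group such that Φ(H) ≤ Ω(H) ≤ Z(H) and |Ω(H)| ≤ 2ⁿ, then |H| ≤ 2^{n(n+5)/2}. -/

import Mathlib

/-!
The squares of `H` lie in `Φ(H) ≤ Ω(H)`, because every maximal subgroup of a finite 2-group has
index 2. Hence `V = H/Ω` and `Ω` are elementary abelian 2-groups, and squaring descends to a
quadratic map `V → Ω` over `𝔽₂` whose polar form is the commutator pairing. It is anisotropic,
since every involution of `H` lies in `Ω`. By Chevalley–Warning an anisotropic quadratic map
between `𝔽₂`-spaces has `dim V ≤ 2 dim Ω`, so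
`|H| = |V| |Ω| ≤ |Ω|³ ≤ 2^{3n} ≤ 2^{n(n+5)/2}`.
-/

open Module MvPolynomial Subgroup
open scoped commutatorElement

/-- Ω(H): the subgroup generated by the elements of order at most 2. -/
def OmegaSG (H : Type*) [Group H] : Subgroup H := Subgroup.closure {h : H | h ^ 2 = 1}

namespace QuadraticMap

theorem exists_matrix_eq_sum {R W σ : Type*} [CommRing R] [AddCommGroup W] [Module R W]
    [Fintype σ] (Q : QuadraticMap R (σ → R) W) :
    ∃ M : Matrix σ σ W, ∀ x, Q x = ∑ i, ∑ j, (x i * x j) • M i j := by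
  classical
  obtain ⟨B, rfl⟩ := LinearMap.BilinMap.toQuadraticMap_surjective Q
  refine ⟨LinearMap.toMatrix₂' R B, fun x => ?_⟩
  rw [LinearMap.BilinMap.toQuadraticMap_apply, ← Matrix.toLinearMap₂'_toMatrix' (R := R) B,
    Matrix.toLinearMap₂'_apply]
  simp only [smul_smul, Matrix.toLinearMap₂'_toMatrix']

def ofPolarZModTwo {V W : Type*} [AddCommGroup V] [Module (ZMod 2) V]
    [AddCommGroup W] [Module (ZMod 2) W] (q : V → W) (h0 : q 0 = 0)
    (hpolar : ∀ x x' y, polar q (x + x') y = polar q x y + polar q x' y) :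
    QuadraticMap (ZMod 2) V W :=
  have hcases : ∀ a : ZMod 2, a = 0 ∨ a = 1 := by decide
  ofPolar q (fun a x => by rcases hcases a with rfl | rfl <;> simp [h0]) hpolar
    (fun a x y => by rcases hcases a with rfl | rfl <;> simp [polar, h0])

variable {K V W : Type*} [Field K] [Finite K] [AddCommGroup V] [Module K V]
  [FiniteDimensional K V] [AddCommGroup W] [Module K W] [FiniteDimensional K W]

/- In coordinates the components of `Q` are quadratic polynomials in `finrank K V` variables whose
only common zero is `0`; Chevalley–Warning forbids this once their degrees add up to less than
the number of variables. -/
theorem Anisotropic.finrank_le_two_mul {Q : QuadraticMap K V W} (hQ : Q.Anisotropic) :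
    finrank K V ≤ 2 * finrank K W := by
  classical
  have := Fintype.ofFinite K
  set b := Module.finBasis K V
  set c := Module.finBasis K W
  obtain ⟨M, hM⟩ := (Q.comp b.equivFun.symm.toLinearMap).exists_matrix_eq_sum
  let P : Fin (finrank K W) → MvPolynomial (Fin (finrank K V)) K :=
    fun k => ∑ i, ∑ j, C (c.repr (M i j) k) * (X i * X j)
  have hP_eval : ∀ x k, eval x (P k) = c.repr (Q (b.equivFun.symm x)) k := by
    intro x k
    have hQx : Q (b.equivFun.symm x) = ∑ i, ∑ j, (x i * x j) • M i j := hM x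
    rw [hQx]
    simp [P, map_sum, mul_comm]
  have hP_deg : ∀ k, (P k).totalDegree ≤ 2 := fun k =>
    (totalDegree_finsetSum _ _).trans <| Finset.sup_le fun i _ =>
      (totalDegree_finsetSum _ _).trans <| Finset.sup_le fun j _ =>
        (totalDegree_mul _ _).trans <| by
          grw [totalDegree_C, totalDegree_mul, totalDegree_X, totalDegree_X]
  by_contra! hlt
  have hsum : ∑ k, (P k).totalDegree < Fintype.card (Fin (finrank K V)) :=
    calc ∑ k, (P k).totalDegree ≤ ∑ _k : Fin (finrank K W), 2 :=
          Finset.sum_le_sum fun k _ => hP_deg k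
      _ < _ := by simpa [mul_comm] using hlt
  have hsol : ∃ x₀ : {x // ∀ k, eval x (P k) = 0}, ∀ y, y = x₀ := by
    refine ⟨⟨0, fun k => by rw [hP_eval]; simp⟩, fun ⟨x, hx⟩ => Subtype.ext ?_⟩
    have hQx : Q (b.equivFun.symm x) = 0 :=
      c.repr.injective <| by ext k; simpa [hP_eval] using hx k
    exact b.equivFun.symm.injective (by rw [hQ _ hQx, map_zero])
  have hdvd := char_dvd_card_solutions_of_fintype_sum_lt (ringChar K) hsum
  rw [(@Fintype.card_eq_one_iff _ (_)).2 hsol, Nat.dvd_one] at hdvd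
  exact CharP.ringChar_ne_one hdvd

theorem Anisotropic.natCard_le_sq {Q : QuadraticMap K V W} (hQ : Q.Anisotropic) :
    Nat.card V ≤ Nat.card W ^ 2 := by
  rw [natCard_eq_pow_finrank (K := K) (V := V), natCard_eq_pow_finrank (K := K) (V := W),
    ← pow_mul, mul_comm]
  exact Nat.pow_le_pow_right (Nat.card_pos (α := K)) hQ.finrank_le_two_mul

end QuadraticMap

namespace IsPGroup

variable {p : ℕ} [hp : Fact p.Prime] {G : Type*} [Group G] [Finite G]

theorem index_eq_of_isCoatom (hG : IsPGroup p G) {M : Subgroup G} (hM : IsCoatom M) :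
    M.index = p := by
  obtain ⟨k, hk⟩ := hG.index M
  obtain ⟨n, hn⟩ := (hG.to_subgroup M).exists_card_eq
  have hk0 : k ≠ 0 := by
    rintro rfl
    exact hM.1 (index_eq_one.1 (by rw [hk, pow_zero]))
  have hdvd : p ^ (n + 1) ∣ Nat.card G := by
    rw [← M.index_mul_card, hk, hn, pow_succ']
    exact mul_dvd_mul_right (dvd_pow_self p hk0) _
  obtain ⟨K, hK, hMK⟩ := Sylow.exists_subgroup_card_pow_succ hdvd hn
  have hKM : K ≠ M := by
    rintro rfl
    exact (Nat.pow_lt_pow_succ hp.out.one_lt).ne (hn.symm.trans hK)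
  have hKtop : K = ⊤ := (hM.le_iff.1 hMK).resolve_right hKM
  apply Nat.eq_of_mul_eq_mul_right (Nat.card_pos (α := M))
  rw [M.index_mul_card, ← card_top, ← hKtop, hK, hn, pow_succ']

theorem pow_mem_frattini (hG : IsPGroup p G) (g : G) : g ^ p ∈ frattini G := by
  simp only [frattini, Order.radical, mem_iInf]
  intro M hM
  have := hG.isNilpotent
  have := NormalizerCondition.normal_of_coatom M Group.normalizerCondition_of_isNilpotent hM
  simpa [hG.index_eq_of_isCoatom hM] using M.pow_index_mem g

end IsPGroup

section CentralCommutators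

variable {G : Type*} [Group G]

theorem sq_mul_of_commutatorElement_mem_center {x y : G} (h : ⁅y, x⁆ ∈ center G) :
    (x * y) ^ 2 = ⁅y, x⁆ * x ^ 2 * y ^ 2 := by
  calc (x * y) ^ 2 = x * ⁅y, x⁆ * x * y * y := by rw [sq, commutatorElement_def]; group
    _ = ⁅y, x⁆ * x ^ 2 * y ^ 2 := by rw [mem_center_iff.1 h x]; simp only [sq, mul_assoc]

theorem commutatorElement_mul_right_of_mem_center {a b c : G} (h : ⁅a, c⁆ ∈ center G) :
    ⁅a, b * c⁆ = ⁅a, b⁆ * ⁅a, c⁆ := by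
  rw [commutatorElement_mul_right_eq_mul_conj, mul_assoc _ b, mem_center_iff.1 h b]
  group

theorem normal_of_le_center {A : Subgroup G} (hA : A ≤ center G) : A.Normal :=
  ⟨fun a ha g => by rwa [mem_center_iff.1 (hA ha) g, mul_inv_cancel_right]⟩

end CentralCommutators

namespace QuotientGroup

variable {G : Type*} [Group G] {A : Subgroup G} [A.Normal]

theorem sq_eq_one_of_forall_sq_mem (hsq : ∀ g : G, g ^ 2 ∈ A) (v : G ⧸ A) : v ^ 2 = 1 := by
  induction v using QuotientGroup.induction_on with
  | H g => exact (eq_one_iff _).2 (hsq g)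

theorem commute_of_forall_sq_mem (hsq : ∀ g : G, g ^ 2 ∈ A) (u v : G ⧸ A) : Commute u v :=
  Commute.of_orderOf_dvd_two (fun w => orderOf_dvd_of_pow_eq_one (sq_eq_one_of_forall_sq_mem hsq w))
    u v

end QuotientGroup

section SquaringOnQuotient

variable {G : Type*} [Group G] {A : Subgroup G}

theorem commutatorElement_mem_of_forall_sq_mem [A.Normal] (hsq : ∀ g : G, g ^ 2 ∈ A) (x y : G) :
    ⁅x, y⁆ ∈ A := by
  rw [← QuotientGroup.eq_one_iff, ← QuotientGroup.mk'_apply, map_commutatorElement,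
    commutatorElement_eq_one_iff_commute]
  exact QuotientGroup.commute_of_forall_sq_mem hsq _ _

variable (A) in
def quotientSq (hAc : A ≤ center G) (hA2 : ∀ a ∈ A, a ^ 2 = 1)
    (hsq : ∀ g : G, g ^ 2 ∈ A) : G ⧸ A → A := fun v =>
  v.liftOn' (fun g => ⟨g ^ 2, hsq g⟩) fun a b hab => Subtype.ext <| by
    obtain ⟨w, hw, rfl⟩ : ∃ w ∈ A, b = a * w :=
      ⟨a⁻¹ * b, QuotientGroup.leftRel_apply.1 hab, by group⟩
    change a ^ 2 = (a * w) ^ 2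
    rw [Commute.mul_pow (mem_center_iff.1 (hAc hw) a), hA2 w hw, mul_one]

variable (hAc : A ≤ center G) (hA2 : ∀ a ∈ A, a ^ 2 = 1) (hsq : ∀ g : G, g ^ 2 ∈ A)

theorem quotientSq_mk_mul [A.Normal] (x y : G) :
    quotientSq A hAc hA2 hsq (x * y : G) =
      ⟨⁅y, x⁆, commutatorElement_mem_of_forall_sq_mem hsq y x⟩ *
        quotientSq A hAc hA2 hsq x * quotientSq A hAc hA2 hsq y :=
  Subtype.ext <| sq_mul_of_commutatorElement_mem_center <|
    hAc (commutatorElement_mem_of_forall_sq_mem hsq y x)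

theorem eq_one_of_quotientSq_eq_one [A.Normal] (hinv : ∀ g : G, g ^ 2 = 1 → g ∈ A)
    {v : G ⧸ A} (hv : quotientSq A hAc hA2 hsq v = 1) : v = 1 := by
  induction v using QuotientGroup.induction_on with
  | H g => exact (QuotientGroup.eq_one_iff g).2 (hinv g (congrArg Subtype.val hv))

end SquaringOnQuotient

theorem card_le_card_pow_three_of_forall_sq_mem {G : Type*} [Group G] [Finite G] {A : Subgroup G}
    (hAc : A ≤ center G) (hA2 : ∀ a ∈ A, a ^ 2 = 1) (hsq : ∀ g : G, g ^ 2 ∈ A)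
    (hinv : ∀ g : G, g ^ 2 = 1 → g ∈ A) :
    Nat.card G ≤ Nat.card A ^ 3 := by
  have := normal_of_le_center hAc
  let _ : CommGroup A := { mul_comm := fun a b => Subtype.ext (mem_center_iff.1 (hAc b.2) a) }
  let _ : CommGroup (G ⧸ A) := { mul_comm := QuotientGroup.commute_of_forall_sq_mem hsq }
  let _ : Module (ZMod 2) (Additive A) := AddCommGroup.zmodModule fun a =>
    congrArg Additive.ofMul (Subtype.ext (hA2 _ a.toMul.2))
  let _ : Module (ZMod 2) (Additive (G ⧸ A)) := AddCommGroup.zmodModule fun v =>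
    congrArg Additive.ofMul (QuotientGroup.sq_eq_one_of_forall_sq_mem hsq v.toMul)
  let q : Additive (G ⧸ A) → Additive A := fun v => .ofMul (quotientSq A hAc hA2 hsq v.toMul)
  have hq_polar_mk : ∀ x y : G, QuadraticMap.polar q (.ofMul (x : G ⧸ A)) (.ofMul y) =
      .ofMul ⟨⁅y, x⁆, commutatorElement_mem_of_forall_sq_mem hsq y x⟩ := by
    intro x y
    rw [QuadraticMap.polar, sub_sub, sub_eq_iff_eq_add, ← add_assoc]
    exact congrArg Additive.ofMul (quotientSq_mk_mul hAc hA2 hsq x y)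
  have hq_zero : q 0 = 0 := congrArg Additive.ofMul (Subtype.ext (one_pow 2))
  let Q := QuadraticMap.ofPolarZModTwo q hq_zero <| by
    refine (Additive.ofMul.surjective.comp QuotientGroup.mk_surjective).forall₃.2
      fun x x' y => ?_
    change QuadraticMap.polar q (.ofMul ((x * x' : G) : G ⧸ A)) _ = _
    simp only [Function.comp_apply, hq_polar_mk]
    exact congrArg Additive.ofMul (Subtype.ext (commutatorElement_mul_right_of_mem_center
      (hAc (commutatorElement_mem_of_forall_sq_mem hsq y x'))))
  have hQ : Q.Anisotropic := fun v hv => congrArg Additive.ofMul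
    (eq_one_of_quotientSq_eq_one hAc hA2 hsq hinv (congrArg Additive.toMul hv))
  calc Nat.card G = Nat.card (G ⧸ A) * Nat.card A := card_eq_card_quotient_mul_card_subgroup A
    _ ≤ Nat.card A ^ 2 * Nat.card A := Nat.mul_le_mul_right _ hQ.natCard_le_sq
    _ = Nat.card A ^ 3 := by ring

theorem sq_eq_one_of_mem_omegaSG {H : Type*} [Group H] (h : OmegaSG H ≤ center H) {a : H}
    (ha : a ∈ OmegaSG H) : a ^ 2 = 1 := by
  induction ha using Subgroup.closure_induction with
  | mem x hx => exact hx
  | one => exact one_pow 2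
  | mul x y _ hy hx2 hy2 => rw [Commute.mul_pow (mem_center_iff.1 (h hy) x), hx2, hy2, one_mul]
  | inv x _ hx2 => rw [inv_pow, hx2, inv_one]

/-- **Lemma 4.14**: if `H` is a finite 2-group with `Φ(H) ≤ Ω(H) ≤ Z(H)` and
`|Ω(H)| ≤ 2ⁿ`, then `|H| ≤ 2^(n(n+5)/2)`. -/
theorem card_le_of_omega_central (H : Type*) [Group H] [Finite H] (h2 : IsPGroup 2 H)
    (n : ℕ) (h1 : frattini H ≤ OmegaSG H) (h2' : OmegaSG H ≤ Subgroup.center H)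
    (h3 : Nat.card (OmegaSG H) ≤ 2 ^ n) :
    Nat.card H ≤ 2 ^ (n * (n + 5) / 2) := by
  have hcube : Nat.card H ≤ Nat.card (OmegaSG H) ^ 3 :=
    card_le_card_pow_three_of_forall_sq_mem h2' (fun _ => sq_eq_one_of_mem_omegaSG h2')
      (fun g => h1 (h2.pow_mem_frattini g)) (fun _ hg => subset_closure hg)
  calc Nat.card H ≤ (2 ^ n) ^ 3 := hcube.trans (Nat.pow_le_pow_left h3 3)
    _ = 2 ^ (3 * n) := by ring
    _ ≤ 2 ^ (n * (n + 5) / 2) := by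
      refine Nat.pow_le_pow_right two_pos ((Nat.le_div_iff_mul_le two_pos).2 ?_)
      nlinarith [Nat.le_self_pow two_ne_zero n]
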